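/- arXiv:1701.02376 — 2 statements merged into one kernel-verified Lean document; each statement's English description precedes it below -/
import Mathlib

section
/- Let N ≥ 3, α > 0, and a, b ≥ 0. Define g(t) = (t^(N-2)/2 − ((N-2)/(2(N+α)))·t^(N+α))·a + (t^N/2 − (N/(2(N+α)))·t^(N+α))·b for t ≥ 0. Then g attains its maximum over [0, ∞) at t = 1, and if a + b > 0 the maximum is strict: g(t) < g(1) for all t ≠ 1. -/
/-!
Writing `p = N - 2` or `p = N` and `q = N + α`, each bracket is `t ^ p / 2 - p / (2 q) t ^ q`
with `0 < p < q`. Weighted AM-GM with weights `p / q`, `1 - p / q` at the points `t ^ q` and `1`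
gives `t ^ p ≤ (p / q) t ^ q + (1 - p / q)`, strictly unless `t = 1`, which says exactly that
each bracket is maximal at `t = 1`. Non-negative weights `a`, `b`, not both zero, preserve this.
-/

open Real

lemma rpow_lt_div_mul_rpow_add_one_sub_div {p q t : ℝ} (hp : 0 < p) (hpq : p < q) (ht : 0 ≤ t)
    (ht1 : t ≠ 1) : t ^ p < p / q * t ^ q + (1 - p / q) := by
  have hq : 0 < q := hp.trans hpq
  have hw : 0 < 1 - p / q := sub_pos.2 ((div_lt_one hq).2 hpq)
  have htq : t ^ q ≠ 1 := by
    rwa [← one_rpow q, Ne, rpow_left_inj ht zero_le_one hq.ne']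
  have amgm := (geom_mean_lt_arith_mean2_weighted_iff_of_pos (div_pos hp hq) hw
    (rpow_nonneg ht q) zero_le_one (add_sub_cancel _ _)).2 htq
  rwa [one_rpow, mul_one, mul_one, ← rpow_mul ht, mul_div_cancel₀ p hq.ne'] at amgm

noncomputable def dilationProfile (p q t : ℝ) : ℝ := t ^ p / 2 - p / (2 * q) * t ^ q

lemma dilationProfile_lt_dilationProfile_one {p q t : ℝ} (hp : 0 < p) (hpq : p < q) (ht : 0 ≤ t)
    (ht1 : t ≠ 1) : dilationProfile p q t < dilationProfile p q 1 := by
  have key := rpow_lt_div_mul_rpow_add_one_sub_div hp hpq ht ht1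
  calc dilationProfile p q t = (t ^ p - p / q * t ^ q) / 2 := by unfold dilationProfile; ring
    _ < (1 - p / q) / 2 := by linarith
    _ = dilationProfile p q 1 := by unfold dilationProfile; rw [one_rpow, one_rpow]; ring

lemma dilationProfile_le_dilationProfile_one {p q t : ℝ} (hp : 0 < p) (hpq : p < q) (ht : 0 ≤ t) :
    dilationProfile p q t ≤ dilationProfile p q 1 := by
  rcases eq_or_ne t 1 with rfl | ht1
  · exact le_rfl
  · exact (dilationProfile_lt_dilationProfile_one hp hpq ht ht1).le

lemma add_mul_lt_add_mul_of_lt_of_lt {x₁ x₂ y₁ y₂ a b : ℝ} (h₁ : x₁ < y₁) (h₂ : x₂ < y₂)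
    (ha : 0 ≤ a) (hb : 0 ≤ b) (hab : 0 < a + b) : x₁ * a + x₂ * b < y₁ * a + y₂ * b := by
  rcases ha.lt_or_eq with ha | rfl
  · nlinarith [mul_le_mul_of_nonneg_right h₂.le hb]
  · nlinarith

/-- The energy along the dilation path through a solution of the Choquard equation,
rewritten via the Pohozaev identity, attains its maximum over `[0,∞)` at `t = 1`,
strictly so if `a + b > 0`. -/
theorem choquard_path_max_at_one
    (N : ℕ) (hN : 3 ≤ N) (α : ℝ) (hα : 0 < α) (a b : ℝ) (ha : 0 ≤ a) (hb : 0 ≤ b) :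
    (∀ t : ℝ, 0 ≤ t →
      (t ^ ((N : ℝ) - 2) / 2 - ((N : ℝ) - 2) / (2 * ((N : ℝ) + α)) * t ^ ((N : ℝ) + α)) * a
        + (t ^ (N : ℝ) / 2 - (N : ℝ) / (2 * ((N : ℝ) + α)) * t ^ ((N : ℝ) + α)) * b
      ≤ ((1 : ℝ) ^ ((N : ℝ) - 2) / 2 - ((N : ℝ) - 2) / (2 * ((N : ℝ) + α)) * 1 ^ ((N : ℝ) + α)) * a
        + ((1 : ℝ) ^ (N : ℝ) / 2 - (N : ℝ) / (2 * ((N : ℝ) + α)) * 1 ^ ((N : ℝ) + α)) * b) ∧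
    (0 < a + b → ∀ t : ℝ, 0 ≤ t → t ≠ 1 →
      (t ^ ((N : ℝ) - 2) / 2 - ((N : ℝ) - 2) / (2 * ((N : ℝ) + α)) * t ^ ((N : ℝ) + α)) * a
        + (t ^ (N : ℝ) / 2 - (N : ℝ) / (2 * ((N : ℝ) + α)) * t ^ ((N : ℝ) + α)) * b
      < ((1 : ℝ) ^ ((N : ℝ) - 2) / 2 - ((N : ℝ) - 2) / (2 * ((N : ℝ) + α)) * 1 ^ ((N : ℝ) + α)) * a
        + ((1 : ℝ) ^ (N : ℝ) / 2 - (N : ℝ) / (2 * ((N : ℝ) + α)) * 1 ^ ((N : ℝ) + α)) * b) := by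
  have hN' : (3 : ℝ) ≤ N := by exact_mod_cast hN
  have hp₁ : (0 : ℝ) < N - 2 := by linarith
  have hp₂ : (0 : ℝ) < N := by linarith
  have hpq₁ : (N : ℝ) - 2 < N + α := by linarith
  have hpq₂ : (N : ℝ) < N + α := by linarith
  refine ⟨fun t ht => ?_, fun hab t ht ht1 => ?_⟩
  · change dilationProfile _ _ t * a + dilationProfile _ _ t * b
      ≤ dilationProfile _ _ 1 * a + dilationProfile _ _ 1 * b
    gcongr
    exacts [dilationProfile_le_dilationProfile_one hp₁ hpq₁ ht,
      dilationProfile_le_dilationProfile_one hp₂ hpq₂ ht]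
  · change dilationProfile _ _ t * a + dilationProfile _ _ t * b
      < dilationProfile _ _ 1 * a + dilationProfile _ _ 1 * b
    exact add_mul_lt_add_mul_of_lt_of_lt
      (dilationProfile_lt_dilationProfile_one hp₁ hpq₁ ht ht1)
      (dilationProfile_lt_dilationProfile_one hp₂ hpq₂ ht ht1) ha hb hab
end

section
/- Let N ≥ 3, α ∈ (0,N), and suppose u ∈ H¹(ℝ^N) is a nontrivial weak solution of −Δu + u = (I_α * |u|^p)|u|^(p-2)u. Testing against u gives ∫(|∇u|² + |u|²) = ∫(I_α * |u|^p)|u|^p; combined with the Pohozaev identity ((N-2)/2)∫|∇u|² + (N/2)∫|u|² = ((N+α)/(2p))∫(I_α*|u|^p)|u|^p, deduce ((N-2)/2 − (N+α)/(2p))∫|∇u|² + (N/2 − (N+α)/(2p))∫|u|² = 0. Conclude that if p ≤ 1+α/N or p ≥ (N+α)/(N-2), then u = 0 almost everywhere. -/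
open MeasureTheory

/-! Subtracting `(N + α) / (2p)` times the testing identity from the Pohozaev identity leaves
`(s - 1) ∫ |∇u|² + s ∫ u² = 0` with `s = N/2 - (N + α)/(2p)`. If `p ≤ 1 + α/N` then `s ≤ 0`, so
`∇u = 0` and `u` is a constant in `L²(ℝ^N)`, hence zero; if `p ≥ (N + α)/(N - 2)` then `s ≥ 1`,
so `∫ u² = 0`. -/

section

variable {E F : Type*} [NormedAddCommGroup E] [NormedSpace ℝ E]
  [NormedAddCommGroup F] [NormedSpace ℝ F] [MeasurableSpace E] {μ : Measure E}

theorem fderiv_eq_zero_of_integral_norm_fderiv_sq_eq_zero [BorelSpace E] [μ.IsOpenPosMeasure]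
    {u : E → F} (hu : ContDiff ℝ 1 u) (hint : Integrable (fun x => ‖fderiv ℝ u x‖ ^ 2) μ)
    (h : ∫ x, ‖fderiv ℝ u x‖ ^ 2 ∂μ = 0) : fderiv ℝ u = 0 := by
  have hcont : Continuous fun x => ‖fderiv ℝ u x‖ ^ 2 :=
    (hu.continuous_fderiv one_ne_zero).norm.pow 2
  have hae := (integral_eq_zero_iff_of_nonneg (fun x => by positivity) hint).mp h
  funext x
  have hx : ‖fderiv ℝ u x‖ ^ 2 = 0 := congrFun ((hcont.ae_eq_iff_eq μ continuous_zero).mp hae) x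
  simpa using hx

theorem eq_zero_of_fderiv_eq_zero_of_memLp {u : E → F} {p : ENNReal} (hp0 : p ≠ 0)
    (hp : p ≠ ⊤) (hμ : μ Set.univ = ⊤) (hd : Differentiable ℝ u) (hf : fderiv ℝ u = 0)
    (hu : MemLp u p μ) : u = 0 := by
  have hconst : u = fun _ => u 0 :=
    funext fun x => is_const_of_fderiv_eq_zero hd (congrFun hf) x 0
  rw [hconst] at hu ⊢
  rcases (memLp_const_iff hp0 hp).mp hu with h0 | hfin
  · exact funext fun _ => h0
  · exact absurd hfin (by simp [hμ])

end

theorem ae_eq_zero_of_integral_sq_eq_zero {X : Type*} [MeasurableSpace X] {μ : Measure X}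
    {u : X → ℝ} (hu : MemLp u 2 μ) (h : ∫ x, u x ^ 2 ∂μ = 0) : u =ᵐ[μ] 0 := by
  filter_upwards [(integral_eq_zero_iff_of_nonneg (fun x => sq_nonneg (u x)) hu.integrable_sq).mp h]
    with x hx
  exact pow_eq_zero_iff two_ne_zero |>.mp hx

theorem choquard_power_nonexistence_general
    (N : ℕ) (hN : 3 ≤ N) (α p : ℝ) (hp : 0 < p)
    (hrange : p ≤ 1 + α / N ∨ ((N : ℝ) + α) / ((N : ℝ) - 2) ≤ p)
    (u : EuclideanSpace ℝ (Fin N) → ℝ)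
    (hreg : ContDiff ℝ 1 u) (hu2 : MemLp u 2 volume)
    (hgrad : Integrable (fun x => ‖fderiv ℝ u x‖ ^ 2) volume)
    (D : ℝ)
    (htest : (∫ x, ‖fderiv ℝ u x‖ ^ 2) + (∫ x, (u x) ^ 2) = D)
    (hpoho : ((N : ℝ) - 2) / 2 * (∫ x, ‖fderiv ℝ u x‖ ^ 2)
        + (N : ℝ) / 2 * (∫ x, (u x) ^ 2) = ((N : ℝ) + α) / (2 * p) * D) :
    (((N : ℝ) - 2) / 2 - ((N : ℝ) + α) / (2 * p)) * (∫ x, ‖fderiv ℝ u x‖ ^ 2)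
        + ((N : ℝ) / 2 - ((N : ℝ) + α) / (2 * p)) * (∫ x, (u x) ^ 2) = 0
      ∧ u =ᵐ[volume] 0 := by
  set A := ∫ x, ‖fderiv ℝ u x‖ ^ 2
  set B := ∫ x, (u x) ^ 2
  have hA : 0 ≤ A := integral_nonneg fun x => by positivity
  have hB : 0 ≤ B := integral_nonneg fun x => by positivity
  have hN3 : (3 : ℝ) ≤ N := by exact_mod_cast hN
  have hcomb : (((N : ℝ) - 2) / 2 - ((N : ℝ) + α) / (2 * p)) * A
      + ((N : ℝ) / 2 - ((N : ℝ) + α) / (2 * p)) * B = 0 := by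
    linear_combination hpoho - ((N : ℝ) + α) / (2 * p) * htest
  refine ⟨hcomb, ?_⟩
  rcases hrange with hlow | hhigh
  · have hs : (N : ℝ) / 2 - ((N : ℝ) + α) / (2 * p) ≤ 0 := by
      rw [sub_nonpos, le_div_iff₀ (by positivity)]
      have hN0 : (0 : ℝ) < N := by linarith
      have := mul_le_mul_of_nonneg_left hlow hN0.le
      rw [mul_add, mul_div_cancel₀ _ hN0.ne'] at this
      linarith
    have hA0 : A = 0 := by nlinarith
    have : Nonempty (Fin N) := ⟨⟨0, by omega⟩⟩
    exact (eq_zero_of_fderiv_eq_zero_of_memLp two_ne_zero ENNReal.ofNat_ne_top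
      (measure_univ_of_isAddLeftInvariant _) (hreg.differentiable one_ne_zero)
      (fderiv_eq_zero_of_integral_norm_fderiv_sq_eq_zero hreg hgrad hA0) hu2).eventuallyEq
  · have hs : 0 ≤ ((N : ℝ) - 2) / 2 - ((N : ℝ) + α) / (2 * p) := by
      rw [sub_nonneg, div_le_iff₀ (by positivity)]
      have := (div_le_iff₀ (by linarith : (0 : ℝ) < N - 2)).mp hhigh
      linarith
    exact ae_eq_zero_of_integral_sq_eq_zero hu2 (by nlinarith)

/-- Non-existence for the Choquard equation with homogeneous nonlinearity `F(u) = |u|^p/p`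
outside the sharp range: from the testing identity and the Pohozaev identity, deduce the
combined identity and conclude `u = 0` a.e. when `p ≤ 1 + α/N` or `p ≥ (N+α)/(N-2)`. -/
theorem choquard_power_nonexistence
    (N : ℕ) (hN : 3 ≤ N) (α p : ℝ) (hα : 0 < α) (hαN : α < N) (hp : 0 < p)
    (hrange : p ≤ 1 + α / N ∨ ((N : ℝ) + α) / ((N : ℝ) - 2) ≤ p)
    (u : EuclideanSpace ℝ (Fin N) → ℝ)
    (hreg : ContDiff ℝ 1 u) (hu2 : MemLp u 2 volume)
    (hgrad : Integrable (fun x => ‖fderiv ℝ u x‖ ^ 2) volume)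
    (D : ℝ)
    (hD : D = ∫ x, (∫ y, (Real.Gamma (((N : ℝ) - α) / 2) /
        (Real.Gamma (α / 2) * Real.pi ^ ((N : ℝ) / 2) * 2 ^ α)) *
        ‖x - y‖ ^ (α - (N : ℝ)) * |u y| ^ p) * |u x| ^ p)
    (htest : (∫ x, ‖fderiv ℝ u x‖ ^ 2) + (∫ x, (u x) ^ 2) = D)
    (hpoho : ((N : ℝ) - 2) / 2 * (∫ x, ‖fderiv ℝ u x‖ ^ 2)
        + (N : ℝ) / 2 * (∫ x, (u x) ^ 2) = ((N : ℝ) + α) / (2 * p) * D) :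
    (((N : ℝ) - 2) / 2 - ((N : ℝ) + α) / (2 * p)) * (∫ x, ‖fderiv ℝ u x‖ ^ 2)
        + ((N : ℝ) / 2 - ((N : ℝ) + α) / (2 * p)) * (∫ x, (u x) ^ 2) = 0
      ∧ u =ᵐ[volume] 0 :=
  choquard_power_nonexistence_general N hN α p hp hrange u hreg hu2 hgrad D htest hpoho
end
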